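/- Let G be the 8-cycle graph and H_G(x) = 1 + (7/2)x + (175/36)x² + (161/36)x³ + (35/18)x⁴ + (35/36)x⁵ + (7/36)x⁶ + (1/18)x⁷. Then H_G has a complex root with real part strictly less than −1; in particular, not all roots of H_G lie on the line Re(z) = −1/2. -/

import Mathlib

open Polynomial

noncomputable def eightCycleEhrhart : Polynomial ℂ :=
  Polynomial.C 1 + Polynomial.C (7/2 : ℂ) * Polynomial.X
    + Polynomial.C (175/36 : ℂ) * Polynomial.X ^ 2
    + Polynomial.C (161/36 : ℂ) * Polynomial.X ^ 3
    + Polynomial.C (35/18 : ℂ) * Polynomial.X ^ 4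
    + Polynomial.C (35/36 : ℂ) * Polynomial.X ^ 5
    + Polynomial.C (7/36 : ℂ) * Polynomial.X ^ 6
    + Polynomial.C (1/18 : ℂ) * Polynomial.X ^ 7

/-
The symmetric edge polytope is reflexive, so `H_G (-1 - z) = -H_G z`; writing
`z = -1/2 - w`, this reads `H_G z = -(w / 1152) q(w²)` for the cubic `q u = 64u³ + 784u² + 3052u + 1491`.
The cubic has a real root `t ∈ (-3/4, 0)`; dividing by `u - t` leaves a real quadratic with negative
discriminant, and its complex root `u` satisfies `Re u + (Im u)² > 1/4`. That inequality says exactly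
that the principal square root of `u` has real part `> 1/2`, so `-1/2 - √u` is a root of `H_G` with
real part `< -1`.
-/

theorem Complex.lt_re_cpow_inv_two {u : ℂ} {a : ℝ} (ha : 0 ≤ a)
    (h : 4 * a ^ 4 < 4 * a ^ 2 * u.re + u.im ^ 2) : a < (u ^ (2⁻¹ : ℂ)).re := by
  have hnorm : 2 * a ^ 2 - u.re < ‖u‖ := by
    rw [Complex.norm_eq_sqrt_sq_add_sq]
    exact Real.lt_sqrt_of_sq_lt (by linarith)
  rw [Complex.cpow_inv_two_re, Real.lt_sqrt ha]
  linarith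

theorem exists_quadratic_eq_zero_of_discrim_neg {a b c : ℝ} (ha : a ≠ 0)
    (h : discrim a b c < 0) :
    ∃ z : ℂ, a * z ^ 2 + b * z + c = 0 ∧ z.re = -b / (2 * a) ∧
      z.im ^ 2 = -discrim a b c / (2 * a) ^ 2 := by
  obtain ⟨s, hs⟩ : ∃ s : ℝ, s ^ 2 = -discrim a b c := ⟨_, Real.sq_sqrt (by linarith)⟩
  refine ⟨⟨-b / (2 * a), s / (2 * a)⟩, ?_, rfl, by rw [div_pow, hs]⟩
  have ha' : (a : ℂ) ≠ 0 := by exact_mod_cast ha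
  have hs' : (s : ℂ) ^ 2 = -(b ^ 2 - 4 * a * c) := by exact_mod_cast hs
  rw [Complex.mk_eq_add_mul_I]
  push_cast
  field_simp
  linear_combination (s : ℂ) ^ 2 * Complex.I_sq - hs'

def eightCycleCubic {R : Type*} [Semiring R] (u : R) : R :=
  64 * u ^ 3 + 784 * u ^ 2 + 3052 * u + 1491

theorem eightCycleEhrhart_eval_neg_half_sub (w : ℂ) :
    eightCycleEhrhart.eval (-1/2 - w) = -(w / 1152) * eightCycleCubic (w ^ 2) := by
  simp only [eightCycleEhrhart, eightCycleCubic, eval_add, eval_mul, eval_pow, eval_C, eval_X]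
  ring

theorem exists_eightCycleCubic_eq_zero_mem_Ioo :
    ∃ t ∈ Set.Ioo (-3/4 : ℝ) 0, eightCycleCubic t = 0 := by
  have hcont : ContinuousOn (eightCycleCubic (R := ℝ)) (Set.Icc (-3/4) 0) := by
    unfold eightCycleCubic; fun_prop
  exact intermediate_value_Ioo (by norm_num) hcont
    ⟨by norm_num [eightCycleCubic], by norm_num [eightCycleCubic]⟩

theorem exists_eightCycleCubic_eq_zero_re_add_im_sq :
    ∃ u : ℂ, eightCycleCubic u = 0 ∧ 1/4 < u.re + u.im ^ 2 := by
  obtain ⟨t, ⟨ht₁, ht₂⟩, ht⟩ := exists_eightCycleCubic_eq_zero_mem_Ioo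
  have hdisc : discrim (64 : ℝ) (784 + 64 * t) (3052 + 784 * t + 64 * t ^ 2) < 0 := by
    rw [discrim]; nlinarith
  obtain ⟨u, hu, hre, him⟩ := exists_quadratic_eq_zero_of_discrim_neg (by norm_num) hdisc
  refine ⟨u, ?_, ?_⟩
  · unfold eightCycleCubic at ht ⊢
    have ht' : 64 * (t : ℂ) ^ 3 + 784 * t ^ 2 + 3052 * t + 1491 = 0 := by exact_mod_cast ht
    push_cast at hu
    linear_combination (u - t) * hu + ht'
  · rw [hre, him, discrim]
    nlinarith

theorem eightCycle_root_off_line :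
    (∃ z : ℂ, eightCycleEhrhart.eval z = 0 ∧ z.re < -1) ∧
      ¬ (∀ z : ℂ, eightCycleEhrhart.eval z = 0 → z.re = -1/2) := by
  obtain ⟨u, hu, hu_re⟩ := exists_eightCycleCubic_eq_zero_re_add_im_sq
  obtain ⟨w, rfl, hw⟩ : ∃ w : ℂ, w ^ 2 = u ∧ (1/2 : ℝ) < w.re :=
    ⟨_, Complex.cpow_ofNat_inv_pow u 2, Complex.lt_re_cpow_inv_two (by norm_num) (by linarith)⟩
  have hroot : eightCycleEhrhart.eval (-1/2 - w) = 0 := by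
    rw [eightCycleEhrhart_eval_neg_half_sub, hu, mul_zero]
  have hre : (-1/2 - w).re = -1/2 - w.re := by simp
  refine ⟨⟨_, hroot, by linarith⟩, fun hall => ?_⟩
  linarith [hall _ hroot]
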